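/- arXiv:2307.07519 — 3 statements merged into one kernel-verified Lean document; each statement's English description precedes it below -/
import Mathlib

section
/- If C(X) with the U^I-topology is a topological ring, then I ⊆ C*(X), the subring of bounded functions. -/
open TopologicalSpace
open scoped ENNReal NNReal

variable {X : Type*}

/-- The (possibly infinite) sup-distance between two continuous functions. -/
noncomputable def supDist [TopologicalSpace X] (f g : C(X, ℝ)) : ℝ≥0∞ :=
  ⨆ x, (‖f x - g x‖₊ : ℝ≥0∞)

/-- Basic set for the `U^I`-topology. -/
def UIball [TopologicalSpace X] (I : Ideal C(X, ℝ)) (f : C(X, ℝ)) (ε : ℝ) :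
    Set C(X, ℝ) :=
  {g | supDist f g < ENNReal.ofReal ε ∧ f - g ∈ I}

/-- The `U^I`-topology on `C(X, ℝ)`. -/
def UItop [TopologicalSpace X] (I : Ideal C(X, ℝ)) : TopologicalSpace C(X, ℝ) :=
  generateFrom {S | ∃ f ε, 0 < ε ∧ S = UIball I f ε}

/-- Basic set for the `m^I`-topology. -/
def mIball [TopologicalSpace X] (I : Ideal C(X, ℝ)) (f u : C(X, ℝ)) :
    Set C(X, ℝ) :=
  {g | (∀ x, |f x - g x| < u x) ∧ f - g ∈ I}

/-- The `m^I`-topology on `C(X, ℝ)`. -/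
def mItop [TopologicalSpace X] (I : Ideal C(X, ℝ)) : TopologicalSpace C(X, ℝ) :=
  generateFrom {S | ∃ f u, (∀ x, 0 < u x) ∧ S = mIball I f u}

/-- The topology of uniform convergence (`U`-topology) on `C(X, ℝ)`. -/
def Utop [TopologicalSpace X] : TopologicalSpace C(X, ℝ) :=
  generateFrom {S | ∃ (f : C(X, ℝ)) (ε : ℝ), 0 < ε ∧
    S = {g | supDist f g < ENNReal.ofReal ε}}

/-- The `m`-topology on `C(X, ℝ)`. -/
def mtop [TopologicalSpace X] : TopologicalSpace C(X, ℝ) :=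
  generateFrom {S | ∃ (f u : C(X, ℝ)), (∀ x, 0 < u x) ∧
    S = {g | ∀ x, |f x - g x| < u x}}

/-- The bounded continuous functions `C*(X)` as a subset of `C(X, ℝ)`. -/
def Cstar [TopologicalSpace X] : Set C(X, ℝ) :=
  {f | ∃ M : ℝ, ∀ x, |f x| ≤ M}

lemma supDist_triangle' [TopologicalSpace X] (a b c : C(X, ℝ)) :
    supDist a c ≤ supDist a b + supDist b c := by
  refine iSup_le fun x => ?_
  have hx : a x - c x = (a x - b x) + (b x - c x) := by ring
  calc (‖a x - c x‖₊ : ℝ≥0∞) = (‖(a x - b x) + (b x - c x)‖₊ : ℝ≥0∞) := by rw [hx]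
    _ ≤ (‖a x - b x‖₊ : ℝ≥0∞) + (‖b x - c x‖₊ : ℝ≥0∞) := by
        exact_mod_cast nnnorm_add_le _ _
    _ ≤ supDist a b + supDist b c :=
        add_le_add (le_iSup (fun x => (‖a x - b x‖₊ : ℝ≥0∞)) x)
          (le_iSup (fun x => (‖b x - c x‖₊ : ℝ≥0∞)) x)

lemma UIball_mono [TopologicalSpace X] (I : Ideal C(X, ℝ)) (f : C(X, ℝ))
    {ε δ : ℝ} (hεδ : ε ≤ δ) : UIball I f ε ⊆ UIball I f δ := by
  intro g hg
  exact ⟨lt_of_lt_of_le hg.1 (ENNReal.ofReal_le_ofReal hεδ), hg.2⟩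

lemma mem_nhds_UItop [TopologicalSpace X] (I : Ideal C(X, ℝ)) (f : C(X, ℝ))
    {S : Set C(X, ℝ)} (hS : S ∈ @nhds _ (UItop I) f) :
    ∃ δ > 0, UIball I f δ ⊆ S := by
  letI := UItop I
  obtain ⟨U, hUS, hU, hfU⟩ := mem_nhds_iff.mp hS
  have key : ∀ U : Set C(X, ℝ),
      TopologicalSpace.GenerateOpen {S | ∃ g ε, 0 < ε ∧ S = UIball I g ε} U →
      ∀ f : C(X, ℝ), f ∈ U → ∃ δ > 0, UIball I f δ ⊆ U := by
    intro U hU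
    induction hU with
    | basic V hV =>
      intro f hf
      obtain ⟨g, ε, hε, rfl⟩ := hV
      have hfin : supDist g f ≠ ⊤ := hf.1.ne_top
      have hd : (supDist g f).toReal < ε := by
        have := hf.1
        rwa [ENNReal.lt_ofReal_iff_toReal_lt hfin] at this
      refine ⟨ε - (supDist g f).toReal, by linarith, fun k hk => ?_⟩
      constructor
      · have h1 : supDist g k ≤ supDist g f + supDist f k := supDist_triangle' g f k
        have h2 : supDist g f + supDist f k <
            ENNReal.ofReal (supDist g f).toReal
              + ENNReal.ofReal (ε - (supDist g f).toReal) := by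
          rw [ENNReal.ofReal_toReal hfin]
          exact ENNReal.add_lt_add_left hfin hk.1
        calc supDist g k < _ := lt_of_le_of_lt h1 h2
          _ = ENNReal.ofReal ε := by
              rw [← ENNReal.ofReal_add ENNReal.toReal_nonneg (by linarith)]
              ring_nf
      · have : g - k = (g - f) + (f - k) := by ring
        rw [this]
        exact I.add_mem hf.2 hk.2
    | univ => exact fun f _ => ⟨1, one_pos, Set.subset_univ _⟩
    | inter U V _ _ ihU ihV =>
      intro f hf
      obtain ⟨δ₁, hδ₁, h₁⟩ := ihU f hf.1
      obtain ⟨δ₂, hδ₂, h₂⟩ := ihV f hf.2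
      exact ⟨min δ₁ δ₂, lt_min hδ₁ hδ₂, fun k hk =>
        ⟨h₁ (UIball_mono I f (min_le_left _ _) hk),
         h₂ (UIball_mono I f (min_le_right _ _) hk)⟩⟩
    | sUnion S _ ih =>
      intro f hf
      obtain ⟨U, hUS, hfU⟩ := hf
      obtain ⟨δ, hδ, hsub⟩ := ih U hUS f hfU
      exact ⟨δ, hδ, hsub.trans (Set.subset_sUnion_of_mem hUS)⟩
  obtain ⟨δ, hδ, hsub⟩ := key U hU f hfU
  exact ⟨δ, hδ, hsub.trans hUS⟩

theorem stmt4 [TopologicalSpace X] [T2Space X] [CompletelyRegularSpace X]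
    (I : Ideal C(X, ℝ)) (h : @IsTopologicalRing C(X, ℝ) (UItop I) _) :
    (I : Set C(X, ℝ)) ⊆ Cstar := by
  letI := UItop I
  haveI := h
  intro f hf
  by_contra hB
  -- f is unbounded
  have hub : ∀ M : ℝ, ∃ x, M < |f x| := by
    intro M
    by_contra hc
    push_neg at hc
    exact hB ⟨M, fun x => hc x⟩
  -- X is nonempty
  obtain ⟨x₀, _⟩ := hub 0
  -- W is an open neighborhood of f * f
  set W : Set C(X, ℝ) := UIball I (f * f) 1 with hW
  have hWopen : IsOpen W := by
    apply TopologicalSpace.isOpen_generateFrom_of_mem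
    exact ⟨f * f, 1, one_pos, rfl⟩
  have hffW : f * f ∈ W := by
    refine ⟨?_, by simp⟩
    have : supDist (f * f) (f * f) = 0 := by simp [supDist]
    rw [this]
    simp
  -- continuity of left multiplication by f
  have hcont : Continuous (fun g : C(X, ℝ) => f * g) := continuous_mul_left f
  have hpre : (fun g : C(X, ℝ) => f * g) ⁻¹' W ∈ nhds f :=
    hcont.continuousAt.preimage_mem_nhds (hWopen.mem_nhds hffW)
  obtain ⟨δ, hδ, hsub⟩ := mem_nhds_UItop I f hpre
  -- construct the perturbation t
  have hcontinv : Continuous fun x => (1 + |f x|)⁻¹ := by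
    apply Continuous.inv₀ (continuous_const.add f.continuous.abs)
    intro x
    exact (by positivity : (0:ℝ) < 1 + |f x|).ne'
  set invf : C(X, ℝ) := ⟨fun x => (1 + |f x|)⁻¹, hcontinv⟩ with hinvf
  set t : C(X, ℝ) := ContinuousMap.const X (δ / 2) * f * invf with ht
  have htmem : t ∈ I := I.mul_mem_right invf (I.mul_mem_left _ hf)
  have htx : ∀ x, t x = δ / 2 * f x * (1 + |f x|)⁻¹ := fun x => rfl
  have habs : ∀ x, |t x| ≤ δ / 2 := by
    intro x
    rw [htx x]
    have h1 : (0:ℝ) < 1 + |f x| := by positivity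
    rw [abs_mul, abs_mul, abs_of_nonneg (by linarith : (0:ℝ) ≤ δ/2),
      abs_of_nonneg (le_of_lt (inv_pos.mpr h1))]
    have h2 : |f x| * (1 + |f x|)⁻¹ ≤ 1 := by
      rw [mul_inv_le_iff₀ h1]
      nlinarith [abs_nonneg (f x)]
    calc δ / 2 * |f x| * (1 + |f x|)⁻¹ = δ / 2 * (|f x| * (1 + |f x|)⁻¹) := by ring
      _ ≤ δ / 2 * 1 := by
          apply mul_le_mul_of_nonneg_left h2 (by linarith)
      _ = δ / 2 := by ring
  -- f + t is in the δ-ball around f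
  have hgball : f + t ∈ UIball I f δ := by
    constructor
    · refine lt_of_le_of_lt (iSup_le fun x => ?_)
        (ENNReal.ofReal_lt_ofReal_iff hδ |>.mpr (by linarith : δ / 2 < δ))
      have hx : f x - (f + t) x = -t x := by
        simp [ContinuousMap.add_apply]
      rw [hx, ← enorm_eq_nnnorm, ← ofReal_norm]
      apply ENNReal.ofReal_le_ofReal
      rw [norm_neg, Real.norm_eq_abs]
      exact habs x
    · have : f - (f + t) = -t := by ring
      rw [this]
      exact I.neg_mem htmem
  -- hence f * (f + t) ∈ W
  have hprod : f * (f + t) ∈ W := hsub hgball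
  -- but the sup distance is ≥ 1 : contradiction.
  obtain ⟨x₁, hx₁⟩ := hub (max 1 (4 / δ))
  have ha1 : (1:ℝ) < |f x₁| := lt_of_le_of_lt (le_max_left _ _) hx₁
  have ha2 : 4 / δ < |f x₁| := lt_of_le_of_lt (le_max_right _ _) hx₁
  have ha4 : 4 < δ * |f x₁| := by
    rw [div_lt_iff₀ hδ] at ha2
    linarith [mul_comm (|f x₁|) δ]
  have hval : 1 ≤ |(f * f) x₁ - (f * (f + t)) x₁| := by
    have hx : (f * f) x₁ - (f * (f + t)) x₁ = -(f x₁ * t x₁) := by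
      simp [ContinuousMap.mul_apply, ContinuousMap.add_apply]
      ring
    rw [hx, abs_neg, abs_mul, htx x₁, abs_mul, abs_mul,
      abs_of_nonneg (by linarith : (0:ℝ) ≤ δ/2)]
    set a := |f x₁| with hadef
    have hpos : (0:ℝ) < 1 + a := by positivity
    rw [abs_of_nonneg (le_of_lt (inv_pos.mpr hpos))]
    have hb : (0:ℝ) < (1+a)⁻¹ := inv_pos.mpr hpos
    have h4a : 4 * a ≤ δ * a * a := by nlinarith
    have key2 : 2 * (1 + a) ≤ δ * a ^ 2 := by nlinarith
    calc (1:ℝ) = (1 + a) * (1 + a)⁻¹ := (mul_inv_cancel₀ hpos.ne').symm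
      _ ≤ (δ * a ^ 2 / 2) * (1 + a)⁻¹ :=
          mul_le_mul_of_nonneg_right (by linarith) hb.le
      _ = |f x₁| * (δ / 2 * |f x₁| * (1 + |f x₁|)⁻¹) := by rw [← hadef]; ring
  have hge : ENNReal.ofReal 1 ≤ supDist (f * f) (f * (f + t)) := by
    refine le_trans ?_ (le_iSup (fun x => (‖(f * f) x - (f * (f + t)) x‖₊ : ℝ≥0∞)) x₁)
    rw [← enorm_eq_nnnorm, ← ofReal_norm, Real.norm_eq_abs]
    exact ENNReal.ofReal_le_ofReal hval
  exact absurd hprod.1 (not_lt.mpr hge)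
end

section
/- For a convex ideal I of C(X), the U^I-topology equals the m^I-topology on C(X) if and only if X \ ⋂Z[I] is a bounded (relatively pseudocompact) subset of X. -/
open TopologicalSpace
open scoped ENNReal NNReal

variable {X : Type*}

section aux

variable [TopologicalSpace X]

lemma supDist_triangle'_s5 (f g h : C(X, ℝ)) :
    supDist f h ≤ supDist f g + supDist g h := by
  refine iSup_le fun x => ?_
  have h1 : (‖f x - h x‖₊ : ℝ≥0∞) ≤ (‖f x - g x‖₊ : ℝ≥0∞) + (‖g x - h x‖₊ : ℝ≥0∞) := by
    have he : f x - h x = (f x - g x) + (g x - h x) := by ring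
    rw [he]
    exact_mod_cast nnnorm_add_le _ _
  exact h1.trans (add_le_add (le_iSup (fun x => ((‖f x - g x‖₊ : ℝ≥0∞))) x)
    (le_iSup (fun x => ((‖g x - h x‖₊ : ℝ≥0∞))) x))

lemma abs_lt_of_supDist_lt {f g : C(X, ℝ)} {ε : ℝ} (hε : 0 < ε)
    (h : supDist f g < ENNReal.ofReal ε) (x : X) : |f x - g x| < ε := by
  have h2 := lt_of_le_of_lt (le_iSup (fun x => ((‖f x - g x‖₊ : ℝ≥0∞))) x) h
  rw [← enorm_eq_nnnorm, ← ofReal_norm, ENNReal.ofReal_lt_ofReal_iff hε] at h2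
  simpa [Real.norm_eq_abs] using h2

lemma supDist_le_of_abs_le {f g : C(X, ℝ)} {c : ℝ} (h : ∀ x, |f x - g x| ≤ c) :
    supDist f g ≤ ENNReal.ofReal c := by
  refine iSup_le fun x => ?_
  rw [← enorm_eq_nnnorm, ← ofReal_norm]
  exact ENNReal.ofReal_le_ofReal (by simpa [Real.norm_eq_abs] using h x)

lemma generateOpen_of_pointwise {α : Type*} {𝒮 : Set (Set α)} {V : Set α}
    (h : ∀ g ∈ V, ∃ B ∈ 𝒮, g ∈ B ∧ B ⊆ V) : GenerateOpen 𝒮 V := by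
  have hV : V = ⋃₀ {B | B ∈ 𝒮 ∧ B ⊆ V} := by
    ext g
    constructor
    · intro hg
      obtain ⟨B, hB, hgB, hBV⟩ := h g hg
      exact ⟨B, ⟨hB, hBV⟩, hgB⟩
    · rintro ⟨B, ⟨-, hBV⟩, hgB⟩
      exact hBV hgB
  rw [hV]
  exact GenerateOpen.sUnion _ fun B hB => GenerateOpen.basic _ hB.1

lemma UI_nhds_zero {I : Ideal C(X, ℝ)} {V : Set C(X, ℝ)}
    (hV : GenerateOpen {S | ∃ f ε, 0 < ε ∧ S = UIball I f ε} V)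
    (h0 : (0 : C(X, ℝ)) ∈ V) : ∃ ε > 0, UIball I 0 ε ⊆ V := by
  revert h0
  induction hV with
  | basic S hS =>
    intro h0
    obtain ⟨f, δ, hδ, rfl⟩ := hS
    obtain ⟨h1, h2⟩ := h0
    rw [sub_zero] at h2
    set a := (supDist f 0).toReal with ha
    have haδ : a < δ := ENNReal.toReal_lt_of_lt_ofReal h1
    have hfin : supDist f 0 ≠ ⊤ := ne_top_of_lt h1
    have ha0 : 0 ≤ a := ENNReal.toReal_nonneg
    refine ⟨δ - a, sub_pos.mpr haδ, fun g hg => ?_⟩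
    obtain ⟨hg1, hg2⟩ := hg
    constructor
    · have htri := supDist_triangle'_s5 f 0 g
      have hlt : supDist f 0 + supDist 0 g < supDist f 0 + ENNReal.ofReal (δ - a) :=
        ENNReal.add_lt_add_left hfin hg1
      refine lt_of_le_of_lt htri (hlt.trans_le ?_)
      rw [← ENNReal.ofReal_toReal hfin, ← ha,
        ← ENNReal.ofReal_add ha0 (by linarith)]
      have he : a + (δ - a) = δ := by ring
      rw [he]
    · have he : f - g = (f - 0) + (0 - g) := by ring
      rw [he]
      exact I.add_mem (by simpa using h2) hg2
  | univ =>
    exact fun _ => ⟨1, one_pos, fun _ _ => trivial⟩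
  | inter s t _ _ ihs iht =>
    intro h0
    obtain ⟨ε₁, hε₁, hs⟩ := ihs h0.1
    obtain ⟨ε₂, hε₂, ht⟩ := iht h0.2
    refine ⟨min ε₁ ε₂, lt_min hε₁ hε₂, fun g hg => ⟨?_, ?_⟩⟩
    · exact hs ⟨hg.1.trans_le (ENNReal.ofReal_le_ofReal (min_le_left _ _)), hg.2⟩
    · exact ht ⟨hg.1.trans_le (ENNReal.ofReal_le_ofReal (min_le_right _ _)), hg.2⟩
  | sUnion S _ ih =>
    intro h0
    obtain ⟨t, htS, h0t⟩ := h0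
    obtain ⟨ε, hε, hsub⟩ := ih t htS h0t
    exact ⟨ε, hε, fun g hg => ⟨t, htS, hsub hg⟩⟩

end aux

theorem stmt5 [TopologicalSpace X] [T2Space X] [CompletelyRegularSpace X]
    (I : Ideal C(X, ℝ))
    (hconvex : ∀ f g : C(X, ℝ), f ∈ I → 0 ≤ g → g ≤ f → g ∈ I) :
    UItop I = mItop I ↔
      ∀ f : C(X, ℝ), ∃ M : ℝ, ∀ x : X, (∃ g ∈ I, g x ≠ 0) → |f x| ≤ M := by
  constructor
  · intro heq f
    by_contra hcon
    push_neg at hcon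
    set F : C(X, ℝ) := |f| + ContinuousMap.const X 1 with hF
    have hFx : ∀ x, F x = |f x| + 1 := fun x => by
      simp [hF, ContinuousMap.abs_apply]
    have hFpos : ∀ x, 0 < F x := fun x => by
      rw [hFx x]; positivity
    set u : C(X, ℝ) := ⟨fun x => (F x)⁻¹, (map_continuous F).inv₀ fun x => (hFpos x).ne'⟩
      with hu
    have hupos : ∀ x, 0 < u x := fun x => inv_pos.mpr (hFpos x)
    have hopen : (mItop I).IsOpen (mIball I 0 u) :=
      GenerateOpen.basic _ ⟨0, u, hupos, rfl⟩
    rw [← heq] at hopen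
    have h0mem : (0 : C(X, ℝ)) ∈ mIball I 0 u :=
      ⟨fun x => by simpa using hupos x, by simpa using I.zero_mem⟩
    obtain ⟨ε, hε, hsub⟩ := UI_nhds_zero hopen h0mem
    obtain ⟨x, ⟨g, hgI, hgx⟩, hfx⟩ := hcon (2 / ε)
    have hux : u x < ε / 2 := by
      have h1 : 2 / ε < F x := by rw [hFx x]; linarith
      have h2 : (F x)⁻¹ < (2 / ε)⁻¹ := by
        apply inv_strictAnti₀ (by positivity) h1
      calc u x = (F x)⁻¹ := rfl
        _ < (2 / ε)⁻¹ := h2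
        _ = ε / 2 := by rw [inv_div]
    set c : ℝ := ε / (2 * (g x) ^ 2) with hc
    have hgx2 : 0 < (g x) ^ 2 := by positivity
    have hcpos : 0 < c := by positivity
    set k : C(X, ℝ) := g * g * ContinuousMap.const X c with hk
    have hkI : k ∈ I := I.mul_mem_right _ (I.mul_mem_right _ hgI)
    have hk0 : (0 : C(X, ℝ)) ≤ k := by
      rw [ContinuousMap.le_def]
      intro y
      have : k y = g y * g y * c := by simp [hk]
      rw [this]
      simp only [ContinuousMap.zero_apply]
      nlinarith [mul_self_nonneg (g y)]
    set h : C(X, ℝ) := k ⊓ ContinuousMap.const X (ε / 2) with hh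
    have hhy : ∀ y, h y = min (k y) (ε / 2) := fun y => by
      simp [hh, ContinuousMap.inf_apply]
    have hhI : h ∈ I := by
      refine hconvex k h hkI ?_ inf_le_left
      rw [ContinuousMap.le_def]
      intro y
      rw [hhy y]
      simp only [ContinuousMap.zero_apply]
      exact le_min (by simpa using (ContinuousMap.le_def.mp hk0) y) (by positivity)
    have hhx : h x = ε / 2 := by
      rw [hhy x]
      have : k x = ε / 2 := by
        have : k x = g x * g x * c := by simp [hk]
        rw [this, hc]
        field_simp
      rw [this, min_self]
    have hmem : h ∈ UIball I 0 ε := by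
      constructor
      · have hb : ∀ y, |(0 : C(X, ℝ)) y - h y| ≤ ε / 2 := by
          intro y
          rw [hhy y]
          simp only [ContinuousMap.zero_apply, zero_sub, abs_neg]
          rw [abs_of_nonneg (le_min (by simpa using (ContinuousMap.le_def.mp hk0) y)
            (by positivity))]
          exact min_le_right _ _
        refine lt_of_le_of_lt (supDist_le_of_abs_le hb) ?_
        rw [ENNReal.ofReal_lt_ofReal_iff hε]
        linarith
      · simpa using I.neg_mem hhI
    have := (hsub hmem).1 x
    simp only [ContinuousMap.zero_apply, zero_sub, abs_neg, hhx] at this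
    rw [abs_of_nonneg (by positivity)] at this
    linarith
  · intro hb
    apply le_antisymm
    · -- UItop ≤ mItop : each mI generating set is UItop-open
      apply le_generateFrom
      rintro S ⟨f, u, hu, rfl⟩
      show GenerateOpen {S | ∃ f ε, 0 < ε ∧ S = UIball I f ε} (mIball I f u)
      apply generateOpen_of_pointwise
      rintro g ⟨hg1, hg2⟩
      set w : C(X, ℝ) := u - |f - g| with hw
      have hwx : ∀ x, w x = u x - |f x - g x| := fun x => by
        simp [hw, ContinuousMap.abs_apply]
      have hwpos : ∀ x, 0 < w x := fun x => by
        rw [hwx x]; linarith [hg1 x]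
      set v : C(X, ℝ) := ⟨fun x => (w x)⁻¹, (map_continuous w).inv₀ fun x => (hwpos x).ne'⟩
        with hv
      obtain ⟨M, hM⟩ := hb v
      set M' : ℝ := max M 1 with hM'def
      have hM' : 0 < M' := lt_of_lt_of_le one_pos (le_max_right _ _)
      have hwS : ∀ x, (∃ k ∈ I, k x ≠ 0) → 1 / M' ≤ w x := by
        intro x hx
        have h1 : (w x)⁻¹ ≤ M' := (le_of_abs_le (hM x hx)).trans (le_max_left _ _)
        have h2 := mul_le_mul_of_nonneg_left h1 (hwpos x).le
        rw [mul_inv_cancel₀ (hwpos x).ne'] at h2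
        rw [div_le_iff₀ hM']
        linarith
      have hεpos : (0 : ℝ) < 1 / (2 * M') := by positivity
      refine ⟨UIball I g (1 / (2 * M')), ⟨g, 1 / (2 * M'), hεpos, rfl⟩, ⟨?_, ?_⟩, ?_⟩
      · have : supDist g g = 0 := by simp [supDist]
        rw [this]
        exact ENNReal.ofReal_pos.mpr hεpos
      · simpa using I.zero_mem
      · rintro h ⟨hh1, hh2⟩
        have hfh : f - h ∈ I := by
          have he : f - h = (f - g) + (g - h) := by ring
          rw [he]
          exact I.add_mem hg2 hh2
        refine ⟨fun x => ?_, hfh⟩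
        by_cases hx : ∃ k ∈ I, k x ≠ 0
        · have h1 := abs_lt_of_supDist_lt hεpos hh1 x
          have h2 := hwS x hx
          have h3 := hwx x
          have h4 : |f x - h x| ≤ |f x - g x| + |g x - h x| := abs_sub_le _ _ _
          have h5 : 1 / (2 * M') < 1 / M' := by
            rw [div_lt_div_iff₀ (by positivity) hM']
            linarith
          linarith
        · push_neg at hx
          have hfh0 : (f - h) x = 0 := hx _ hfh
          have he : f x - h x = 0 := by simpa using hfh0
          rw [he]
          simpa using hu x
    · -- mItop ≤ UItop : each UI generating set is mItop-open
      apply le_generateFrom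
      rintro S ⟨f, ε, hε, rfl⟩
      show GenerateOpen {S | ∃ f u, (∀ x, 0 < u x) ∧ S = mIball I f u} (UIball I f ε)
      apply generateOpen_of_pointwise
      rintro g ⟨hg1, hg2⟩
      set a := (supDist f g).toReal with ha
      have haε : a < ε := ENNReal.toReal_lt_of_lt_ofReal hg1
      have hfin : supDist f g ≠ ⊤ := ne_top_of_lt hg1
      have ha0 : 0 ≤ a := ENNReal.toReal_nonneg
      set c : ℝ := (ε - a) / 2 with hc
      have hcpos : 0 < c := by rw [hc]; linarith
      refine ⟨mIball I g (ContinuousMap.const X c),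
        ⟨g, ContinuousMap.const X c, fun x => by simpa using hcpos, rfl⟩,
        ⟨fun x => by simpa using hcpos, by simpa using I.zero_mem⟩, ?_⟩
      rintro h ⟨hh1, hh2⟩
      constructor
      · have h2 : supDist g h ≤ ENNReal.ofReal c :=
          supDist_le_of_abs_le fun x => (hh1 x).le.trans (by simp)
        calc supDist f h ≤ supDist f g + supDist g h := supDist_triangle'_s5 f g h
          _ ≤ ENNReal.ofReal a + ENNReal.ofReal c :=
              add_le_add (le_of_eq (by rw [ha, ENNReal.ofReal_toReal hfin])) h2
          _ = ENNReal.ofReal (a + c) := (ENNReal.ofReal_add ha0 hcpos.le).symm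
          _ < ENNReal.ofReal ε := by
              rw [ENNReal.ofReal_lt_ofReal_iff hε, hc]
              linarith
      · have he : f - h = (f - g) + (g - h) := by ring
        rw [he]
        exact I.add_mem hg2 hh2
end

section
/- For an ideal I of C(X), the connected component of 0 in C(X) with the U^I-topology is exactly I ∩ C*(X). -/
open TopologicalSpace
open scoped ENNReal NNReal

variable {X : Type*}

section Aux

variable [TopologicalSpace X]

lemma nnorm_le_supDist (f g : C(X, ℝ)) (x : X) :
    (‖f x - g x‖₊ : ℝ≥0∞) ≤ supDist f g := le_iSup (fun x => (‖f x - g x‖₊ : ℝ≥0∞)) x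

lemma supDist_self (f : C(X, ℝ)) : supDist f f = 0 := by
  simp [supDist]

lemma UIball_isOpen (I : Ideal C(X, ℝ)) (f : C(X, ℝ)) {ε : ℝ} (hε : 0 < ε) :
    @IsOpen C(X, ℝ) (UItop I) (UIball I f ε) :=
  TopologicalSpace.isOpen_generateFrom_of_mem ⟨f, ε, hε, rfl⟩

lemma mem_UIball_self (I : Ideal C(X, ℝ)) (f : C(X, ℝ)) {ε : ℝ} (hε : 0 < ε) :
    f ∈ UIball I f ε := by
  refine ⟨?_, by simp [I.zero_mem]⟩
  rw [supDist_self]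
  exact ENNReal.ofReal_pos.mpr hε

lemma clopen_IC (I : Ideal C(X, ℝ)) :
    @IsClopen C(X, ℝ) (UItop I) ((I : Set C(X, ℝ)) ∩ Cstar) := by
  letI : TopologicalSpace C(X, ℝ) := UItop I
  constructor
  · -- closed: complement is open
    rw [← isOpen_compl_iff]
    rw [isOpen_iff_forall_mem_open]
    intro f hf
    refine ⟨UIball I f 1, ?_, UIball_isOpen I f one_pos, mem_UIball_self I f one_pos⟩
    intro g hg
    obtain ⟨hd, hi⟩ := hg
    intro hgmem
    apply hf
    obtain ⟨hgI, M, hgM⟩ := hgmem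
    constructor
    · have : f = (f - g) + g := by ring
      rw [this]; exact I.add_mem hi hgI
    · refine ⟨M + 1, fun x => ?_⟩
      have h1 : (‖f x - g x‖₊ : ℝ≥0∞) < ENNReal.ofReal 1 :=
        lt_of_le_of_lt (nnorm_le_supDist f g x) hd
      have h2 : |f x - g x| < 1 := by
        rw [ENNReal.ofReal_one, ENNReal.coe_lt_one_iff] at h1
        rw [← Real.norm_eq_abs, ← coe_nnnorm]
        exact_mod_cast h1
      calc |f x| = |(f x - g x) + g x| := by ring_nf
        _ ≤ |f x - g x| + |g x| := abs_add_le _ _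
        _ ≤ 1 + M := by
            have := hgM x
            linarith
        _ = M + 1 := by ring
  · -- open
    rw [isOpen_iff_forall_mem_open]
    intro f hf
    refine ⟨UIball I f 1, ?_, UIball_isOpen I f one_pos, mem_UIball_self I f one_pos⟩
    rintro g ⟨hd, hi⟩
    obtain ⟨hfI, M, hfM⟩ := hf
    constructor
    · have : g = f - (f - g) := by ring
      rw [this]; exact I.sub_mem hfI hi
    · refine ⟨M + 1, fun x => ?_⟩
      have h1 : (‖f x - g x‖₊ : ℝ≥0∞) < ENNReal.ofReal 1 :=
        lt_of_le_of_lt (nnorm_le_supDist f g x) hd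
      have h2 : |f x - g x| < 1 := by
        rw [ENNReal.ofReal_one, ENNReal.coe_lt_one_iff] at h1
        rw [← Real.norm_eq_abs, ← coe_nnnorm]
        exact_mod_cast h1
      have := hfM x
      calc |g x| = |f x - (f x - g x)| := by ring_nf
        _ ≤ |f x| + |f x - g x| := abs_sub _ _
        _ ≤ M + 1 := by linarith

lemma segment_continuous (I : Ideal C(X, ℝ)) (f : C(X, ℝ)) (hfI : f ∈ I)
    {M : ℝ} (hM : ∀ x, |f x| ≤ M) :
    @Continuous ℝ C(X, ℝ) _ (UItop I) (fun t : ℝ => t • f) := by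
  rw [UItop, continuous_generateFrom_iff]
  rintro S ⟨h, ε, hε, rfl⟩
  rw [Metric.isOpen_iff]
  intro t₀ ht₀
  obtain ⟨hd₀, hi₀⟩ := ht₀
  obtain ⟨r, hr, hlt⟩ := ENNReal.lt_iff_exists_add_pos_lt.mp hd₀
  set K : ℝ := max M 0 with hK
  have hK0 : 0 ≤ K := le_max_right _ _
  have hKb : ∀ x, |f x| ≤ K := fun x => le_trans (hM x) (le_max_left _ _)
  have hK1 : (0:ℝ) < K + 1 := by linarith
  refine ⟨(r : ℝ) / (K + 1), div_pos (by exact_mod_cast hr) hK1, ?_⟩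
  intro t ht
  rw [Metric.mem_ball, Real.dist_eq] at ht
  constructor
  · -- distance estimate
    have key : ∀ x : X, (‖h x - (t • f) x‖₊ : ℝ≥0∞) ≤ supDist h (t₀ • f) + r := by
      intro x
      have e1 : h x - (t • f) x = (h x - (t₀ • f) x) + (t₀ - t) * f x := by
        simp [ContinuousMap.smul_apply]; ring
      have e2 : (‖h x - (t • f) x‖₊ : ℝ≥0∞) ≤
          (‖h x - (t₀ • f) x‖₊ : ℝ≥0∞) + (‖(t₀ - t) * f x‖₊ : ℝ≥0∞) := by
        rw [e1]
        exact_mod_cast nnnorm_add_le _ _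
      have e3 : ‖(t₀ - t) * f x‖ ≤ (r : ℝ) := by
        rw [Real.norm_eq_abs, abs_mul]
        have h1 : |t₀ - t| ≤ (r : ℝ) / (K + 1) := by
          rw [abs_sub_comm]; exact le_of_lt ht
        have h2 : |t₀ - t| * |f x| ≤ ((r : ℝ) / (K + 1)) * (K + 1) :=
          mul_le_mul h1 (le_trans (hKb x) (by linarith)) (abs_nonneg _) (by positivity)
        rwa [div_mul_cancel₀ _ (ne_of_gt hK1)] at h2
      have e4 : (‖(t₀ - t) * f x‖₊ : ℝ≥0∞) ≤ (r : ℝ≥0∞) := by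
        apply ENNReal.coe_le_coe.mpr
        rw [← NNReal.coe_le_coe, coe_nnnorm]
        exact e3
      calc (‖h x - (t • f) x‖₊ : ℝ≥0∞)
          ≤ (‖h x - (t₀ • f) x‖₊ : ℝ≥0∞) + (‖(t₀ - t) * f x‖₊ : ℝ≥0∞) := e2
        _ ≤ supDist h (t₀ • f) + r := add_le_add (nnorm_le_supDist h (t₀ • f) x) e4
    calc supDist h (t • f) ≤ supDist h (t₀ • f) + r := iSup_le key
      _ < ENNReal.ofReal ε := hlt
  · -- ideal membership
    have e1 : h - t • f = (h - t₀ • f) + (t₀ - t) • f := by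
      ext x; simp; ring
    have e2 : (t₀ - t) • f = ContinuousMap.const X (t₀ - t) * f := by
      ext x; simp
    rw [e1, e2]
    exact I.add_mem hi₀ (I.mul_mem_left _ hfI)

end Aux

theorem stmt9 [TopologicalSpace X] [T2Space X] [CompletelyRegularSpace X]
    (I : Ideal C(X, ℝ)) :
    @connectedComponent C(X, ℝ) (UItop I) 0 = (I : Set C(X, ℝ)) ∩ Cstar := by
  letI : TopologicalSpace C(X, ℝ) := UItop I
  apply Set.Subset.antisymm
  · exact (clopen_IC I).connectedComponent_subset ⟨I.zero_mem, 0, by simp⟩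
  · rintro f ⟨hfI, M, hM⟩
    have hcont := segment_continuous I f hfI hM
    have hconn : IsPreconnected ((fun t : ℝ => t • f) '' Set.Icc 0 1) :=
      isPreconnected_Icc.image _ hcont.continuousOn
    have h0 : (0 : C(X, ℝ)) ∈ (fun t : ℝ => t • f) '' Set.Icc 0 1 :=
      ⟨0, Set.mem_Icc.mpr ⟨le_refl 0, zero_le_one⟩, by simp⟩
    have h1 : f ∈ (fun t : ℝ => t • f) '' Set.Icc 0 1 :=
      ⟨1, Set.mem_Icc.mpr ⟨zero_le_one, le_refl 1⟩, by simp⟩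
    exact hconn.subset_connectedComponent h0 h1
end
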